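/- arXiv:2102.10321 — 3 statements merged into one kernel-verified Lean document; each statement's English description precedes it below -/
import Mathlib

section
/- Let F be a finite field of characteristic 2 with |F| ≥ 4, and let k1, k2 ∈ F. For all nonzero e_i, e_j ∈ F there exist s, t, x1, u ∈ F with x1 ≠ k1 and x1 + e_i ≠ k1 such that u·(x1 + k1) = s·x1 + t + k2 and (u + e_j)·(x1 + e_i + k1) = s·(x1 + e_i) + t + k2. (Equivalently, the authentication map a(x) = (s·x + t + k2)/(x + k1) satisfies a(x1 + e_i) = a(x1) + e_j, i.e. the projective-plane authentication scheme over a field of characteristic 2 is complete in the sense of Kam and Davida.) -/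
/-!
Take the authenticator `u = 0`. Both conditions then say that the affine function
`x ↦ s * x + t + k₂` takes prescribed values at the two distinct points `x₁` and `x₁ + ei`,
which linear interpolation always achieves. It remains to choose `x₁` outside the two poles
`k₁` and `k₁ - ei` of the authentication map, possible since `F` has at least three elements.
-/

theorem exists_affine_eq_of_ne {F : Type*} [Field F] {x y : F} (h : x ≠ y) (a b : F) :
    ∃ s c : F, s * x + c = a ∧ s * y + c = b := by
  have hyx : y - x ≠ 0 := sub_ne_zero.mpr h.symm
  refine ⟨(b - a) / (y - x), a - (b - a) / (y - x) * x, by ring, ?_⟩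
  field_simp
  ring

theorem projective_authentication_complete_general (F : Type*) [Field F] [Fintype F]
    (hcard : 4 ≤ Fintype.card F) (k₁ k₂ : F) :
    ∀ ei ej : F, ei ≠ 0 → ej ≠ 0 →
      ∃ s t x₁ u : F, x₁ ≠ k₁ ∧ x₁ + ei ≠ k₁ ∧
        u * (x₁ + k₁) = s * x₁ + t + k₂ ∧
        (u + ej) * (x₁ + ei + k₁) = s * (x₁ + ei) + t + k₂ := by
  intro ei ej hei _
  have hcard₃ : 3 ≤ ENat.card F := by
    rw [ENat.card_eq_coe_fintype_card]
    exact_mod_cast (by omega : 3 ≤ Fintype.card F)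
  obtain ⟨x₁, hx₁, hx₁ei⟩ := ENat.exists_ne_ne_of_three_le hcard₃ k₁ (k₁ - ei)
  have hshift : x₁ ≠ x₁ + ei := by simpa using hei
  obtain ⟨s, c, h₁, h₂⟩ := exists_affine_eq_of_ne hshift 0 (ej * (x₁ + ei + k₁))
  refine ⟨s, c - k₂, x₁, 0, hx₁, fun h ↦ hx₁ei (eq_sub_of_add_eq h), ?_, ?_⟩
  · linear_combination -h₁
  · linear_combination -h₂

/-- Completeness of the projective-plane authentication scheme over a field of
characteristic 2 (Kam–Davida): for any key `(k₁, k₂)` and any nonzero "bit flips"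
`ei, ej`, there are parameters `s, t` of the message line and a message coordinate `x₁`
(with `x₁ ≠ k₁` and `x₁ + ei ≠ k₁`) and an authenticator `u` such that
`u = a(x₁)` and `u + ej = a(x₁ + ei)`, where `a(x) = (s·x + t + k₂)/(x + k₁)`;
i.e. flipping bit `i` of the input flips bit `j` of the output. -/
theorem projective_authentication_complete (F : Type*) [Field F] [Fintype F] [CharP F 2]
    (hcard : 4 ≤ Fintype.card F) (k₁ k₂ : F) :
    ∀ ei ej : F, ei ≠ 0 → ej ≠ 0 →
      ∃ s t x₁ u : F, x₁ ≠ k₁ ∧ x₁ + ei ≠ k₁ ∧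
        u * (x₁ + k₁) = s * x₁ + t + k₂ ∧
        (u + ej) * (x₁ + ei + k₁) = s * (x₁ + ei) + t + k₂ :=
  projective_authentication_complete_general F hcard k₁ k₂
end

section
/- In a finite Möbius plane in which every circle contains exactly q+1 points (q ≥ 2), the total number of points is q² + 1. -/
/-- A finite Möbius plane: a finite set of points `S` with a set of subsets of `S` called
circles such that (M1) any three pairwise distinct points lie on exactly one circle,
(M2) for every circle `A`, every `a ∈ A` and every `b ∉ A` there is exactly one circle
`B` with `a, b ∈ B` and `A ∩ B = {a}`, and (M3) `|S| ≥ 4` and there are four pairwise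
distinct points not lying on a common circle. -/
structure FiniteMoebiusPlane (S : Type*) [Fintype S] where
  circles : Set (Set S)
  M1 : ∀ a b c : S, a ≠ b → b ≠ c → a ≠ c →
    ∃! C : Set S, C ∈ circles ∧ a ∈ C ∧ b ∈ C ∧ c ∈ C
  M2 : ∀ A ∈ circles, ∀ a ∈ A, ∀ b ∉ A,
    ∃! B : Set S, B ∈ circles ∧ a ∈ B ∧ b ∈ B ∧ A ∩ B = {a}
  M3 : 4 ≤ Fintype.card S ∧ ∃ p : Fin 4 → S, Function.Injective p ∧
    ∀ C ∈ circles, ¬ ∀ i : Fin 4, p i ∈ C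

/-! Fix a circle `A`, a point `a ∈ A` and a point `b ∉ A`. Every `c ∈ A \ {a}` lies on exactly
one circle through `a` and `b`, and exactly one further such circle is tangent to `A` at `a`, so
the pencil of circles through `a` and `b` has `q + 1` members. These circles partition the points
other than `a` and `b` into blocks of `q - 1`, whence `|S| = 2 + (q + 1)(q - 1) = q² + 1`. -/

theorem Set.ncard_eq_ncard_of_existsUnique {α β : Type*} {s : Set α} {t : Set β}
    (r : α → β → Prop) (hs : ∀ x ∈ s, ∃! y, y ∈ t ∧ r x y) (ht : ∀ y ∈ t, ∃! x, x ∈ s ∧ r x y) :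
    s.ncard = t.ncard := by
  refine Set.ncard_congr (fun x hx => (hs x hx).choose) (fun x hx => (hs x hx).choose_spec.1.1)
    (fun x x' hx hx' h => ?_) (fun y hy => ?_)
  · obtain ⟨hyt, hxy⟩ := (hs x hx).choose_spec.1
    obtain ⟨-, hx'y⟩ := (hs x' hx').choose_spec.1
    rw [← h] at hx'y
    exact (ht _ hyt).unique ⟨hx, hxy⟩ ⟨hx', hx'y⟩
  · obtain ⟨x, ⟨hx, hxy⟩, -⟩ := ht y hy
    exact ⟨x, hx, ((hs x hx).choose_spec.2 y ⟨hy, hxy⟩).symm⟩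

namespace FiniteMoebiusPlane

variable {S : Type*} [Fintype S] (MP : FiniteMoebiusPlane S)

def pencil (a b : S) : Set (Set S) := {C | C ∈ MP.circles ∧ a ∈ C ∧ b ∈ C}

theorem exists_circle_mem_notMem : ∃ A ∈ MP.circles, ∃ a ∈ A, ∃ b, b ∉ A := by
  obtain ⟨-, p, hp, hnp⟩ := MP.M3
  have hne {i j : Fin 4} (h : i ≠ j) : p i ≠ p j := hp.ne h
  obtain ⟨A, ⟨hA, ha, -⟩, -⟩ :=
    MP.M1 (p 0) (p 1) (p 2) (hne (by decide)) (hne (by decide)) (hne (by decide))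
  obtain ⟨i, hi⟩ := not_forall.mp (hnp A hA)
  exact ⟨A, hA, p 0, ha, p i, hi⟩

variable {MP}

theorem inter_subset_pair {A C : Set S} (hA : A ∈ MP.circles) (hC : C ∈ MP.circles) (hAC : A ≠ C)
    {a c : S} (hac : a ≠ c) (ha : a ∈ A ∩ C) (hc : c ∈ A ∩ C) : A ∩ C ⊆ {a, c} := by
  intro d hd
  by_contra hdac
  simp only [Set.mem_insert_iff, Set.mem_singleton_iff, not_or] at hdac
  exact hAC <| (MP.M1 a c d hac (Ne.symm hdac.2) (Ne.symm hdac.1)).unique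
    ⟨hA, ha.1, hc.1, hd.1⟩ ⟨hC, ha.2, hc.2, hd.2⟩

theorem ncard_pencil_eq_ncard {A : Set S} (hA : A ∈ MP.circles) {a b : S} (ha : a ∈ A)
    (hb : b ∉ A) : (MP.pencil a b).ncard = A.ncard := by
  have hAC {C : Set S} (hC : C ∈ MP.pencil a b) : A ≠ C := fun h => hb (h ▸ hC.2.2)
  symm
  -- `c ∈ A` is matched with the pencil circle through `c`, the one tangent to `A` when `c = a`
  apply Set.ncard_eq_ncard_of_existsUnique (fun c C => c ∈ C ∧ A ∩ C ⊆ {a, c})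
  · intro c hc
    by_cases hca : c = a
    · subst hca
      convert MP.M2 A hA c ha b hb using 2 with C
      simp only [pencil, Set.mem_ofPred_eq, Set.pair_eq_singleton, Set.Subset.antisymm_iff,
        Set.singleton_subset_iff, Set.mem_inter_iff, ha, true_and]
      tauto
    · have hbc : b ≠ c := fun h => hb (h ▸ hc)
      obtain ⟨C, ⟨hC, haC, hbC, hcC⟩, huniq⟩ :=
        MP.M1 a b c (ne_of_mem_of_not_mem ha hb) hbc (Ne.symm hca)
      refine ⟨C, ⟨⟨hC, haC, hbC⟩, hcC, inter_subset_pair hA hC (hAC ⟨hC, haC, hbC⟩)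
        (Ne.symm hca) ⟨ha, haC⟩ ⟨hc, hcC⟩⟩, ?_⟩
      rintro C' ⟨⟨hC', haC', hbC'⟩, hcC', -⟩
      exact huniq C' ⟨hC', haC', hbC', hcC'⟩
  · intro C hC
    by_cases htan : A ∩ C ⊆ {a}
    · exact ⟨a, ⟨ha, hC.2.1, by simpa using htan⟩, fun c hc => htan ⟨hc.1, hc.2.1⟩⟩
    · obtain ⟨c, hcAC, hca⟩ := Set.not_subset.mp htan
      refine ⟨c, ⟨hcAC.1, hcAC.2,
        inter_subset_pair hA hC.1 (hAC hC) (Ne.symm hca) ⟨ha, hC.2.1⟩ hcAC⟩, ?_⟩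
      rintro d ⟨-, -, hsub⟩
      rcases hsub hcAC with h | h
      exacts [absurd h hca, h.symm]

theorem card_eq_ncard_pencil_mul_add_two {a b : S} (hab : a ≠ b) {n : ℕ}
    (hcirc : ∀ C ∈ MP.circles, C.ncard = n) :
    Fintype.card S = (MP.pencil a b).ncard * (n - 2) + 2 := by
  classical
  -- every point other than `a` and `b` lies on exactly one circle of the pencil
  have hcount := Finset.card_mul_eq_card_mul (fun y C => y ∈ C)
    (s := Finset.univ \ {a, b}) (t := (MP.pencil a b).toFinset) (m := 1) (n := n - 2) ?_ ?_
  · rw [mul_one, Finset.card_sdiff_of_subset (Finset.subset_univ _), Finset.card_univ,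
      Finset.card_pair hab, ← Set.ncard_eq_toFinset_card'] at hcount
    have hcard : 2 ≤ Fintype.card S := by
      simpa [Finset.card_pair hab] using Finset.card_le_univ {a, b}
    omega
  · intro y hy
    simp only [Finset.mem_sdiff, Finset.mem_univ, Finset.mem_insert, Finset.mem_singleton,
      true_and, not_or] at hy
    rw [Finset.card_eq_one_iff_existsUnique]
    simp only [Finset.mem_bipartiteAbove, Set.mem_toFinset]
    simpa only [pencil, Set.mem_ofPred_eq, and_assoc] using
      MP.M1 a b y hab (Ne.symm hy.2) (Ne.symm hy.1)
  · intro C hC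
    rw [Set.mem_toFinset] at hC
    have hsub : {a, b} ⊆ C.toFinset := by
      simp only [Finset.insert_subset_iff, Finset.singleton_subset_iff, Set.mem_toFinset]
      exact ⟨hC.2.1, hC.2.2⟩
    have hbelow : (Finset.univ \ {a, b}).bipartiteBelow (fun y C => y ∈ C) C =
        C.toFinset \ {a, b} := by
      ext y
      simp [Finset.mem_bipartiteBelow, and_comm]
    rw [hbelow, Finset.card_sdiff_of_subset hsub, Finset.card_pair hab,
      ← Set.ncard_eq_toFinset_card', hcirc C hC.1]

end FiniteMoebiusPlane

/-- In a finite Möbius plane in which every circle contains exactly `q + 1` points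
(`q ≥ 2`), the total number of points is `q² + 1`. -/
theorem moebius_card_points (S : Type*) [Fintype S]
    (MP : FiniteMoebiusPlane S) (q : ℕ) (hq : 2 ≤ q)
    (hcirc : ∀ C ∈ MP.circles, Nat.card ↥C = q + 1) :
    Fintype.card S = q ^ 2 + 1 := by
  simp only [Nat.card_coe_set_eq] at hcirc
  obtain ⟨A, hA, a, ha, b, hb⟩ := MP.exists_circle_mem_notMem
  rw [FiniteMoebiusPlane.card_eq_ncard_pencil_mul_add_two (ne_of_mem_of_not_mem ha hb) hcirc,
    FiniteMoebiusPlane.ncard_pencil_eq_ncard hA ha hb, hcirc A hA]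
  obtain ⟨r, rfl⟩ := Nat.exists_eq_add_of_le hq
  rw [show 2 + r + 1 - 2 = r + 1 by omega]
  ring
end

section
/- Let F be a finite field of characteristic 2 with |F| ≥ 4. For all nonzero e_i, e_j ∈ F there exist x, y, u, v ∈ F with (x, y) ≠ (0, 0), (u, v) ≠ (0, 0), (x + e_i, y) ≠ (0, 0) and (u, v + e_j) ≠ (0, 0), such that x·v = u·y and (x + e_i)·(v + e_j) = u·y. (That is, the message point m = (x,y) and ciphertext point c = (u,v) are collinear with the key point k = (0,0), and the bit-flipped points m' = (x + e_i, y) and c' = (u, v + e_j) are also collinear with k; this establishes completeness of the Möbius cipher in the case where the flipped input bit affects the x-coordinate and the flipped output bit affects the y-coordinate.) -/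
/-!
Take `u = x` and `y = v`, so that the first determinant vanishes identically. The second
condition `(x + eᵢ)(v + eⱼ) = x v` is then linear in `v`, namely `eᵢ v = -eⱼ (x + eᵢ)`, and is
solved by dividing by `eᵢ ≠ 0`. All four points are nonzero as soon as `x ∉ {0, -eᵢ}`, and such
an `x` exists because `F` has at least three elements.
-/

theorem Fintype.exists_ne_ne_of_three_le_card {α : Type*} [Fintype α]
    (hcard : 3 ≤ Fintype.card α) (a b : α) : ∃ x, x ≠ a ∧ x ≠ b := by
  classical
  have hlt : ({a, b} : Finset α).card < (Finset.univ : Finset α).card := by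
    rw [Finset.card_univ]
    exact (Finset.card_le_two (a := a) (b := b)).trans_lt hcard
  obtain ⟨x, -, hx⟩ := Finset.exists_mem_notMem_of_card_lt_card hlt
  simp only [Finset.mem_insert, Finset.mem_singleton, not_or] at hx
  exact ⟨x, hx⟩

theorem add_mul_add_eq_mul_of_eq_neg_mul_div {K : Type*} [Field K] {a b x v : K} (ha : a ≠ 0)
    (hv : v = -(b * (x + a) / a)) : (x + a) * (v + b) = x * v := by
  subst hv
  field_simp
  ring

theorem moebius_cipher_complete_mixed_coordinate_general (F : Type*) [Field F] [Fintype F]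
    (hcard : 4 ≤ Fintype.card F) :
    ∀ ei ej : F, ei ≠ 0 → ej ≠ 0 →
      ∃ x y u v : F, (x, y) ≠ (0, 0) ∧ (u, v) ≠ (0, 0) ∧
        (x + ei, y) ≠ ((0 : F), (0 : F)) ∧ (u, v + ej) ≠ ((0 : F), (0 : F)) ∧
        x * v = u * y ∧ (x + ei) * (v + ej) = u * y := by
  intro ei ej hei _
  obtain ⟨x, hx, hx_neg⟩ := Fintype.exists_ne_ne_of_three_le_card (by omega) (0 : F) (-ei)
  have hx_add : x + ei ≠ 0 := fun h => hx_neg (eq_neg_of_add_eq_zero_left h)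
  set v := -(ej * (x + ei) / ei) with hv
  refine ⟨x, v, x, v, by simp [hx], by simp [hx], by simp [hx_add], by simp [hx], rfl, ?_⟩
  exact add_mul_add_eq_mul_of_eq_neg_mul_div hei hv

/-- Completeness of the Möbius cipher over a field of characteristic 2, mixed-coordinate
case: for all nonzero bit flips `ei, ej` there are a message point `m = (x, y)` and a
ciphertext point `c = (u, v)`, both nonzero (i.e. different from the key point
`k = (0,0)`), whose bit-flipped versions `m' = (x + ei, y)` and `c' = (u, v + ej)` are
also nonzero, such that both `m, c` and `m', c'` are collinear with `k = (0,0)`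
(vanishing determinants `x·v = u·y` and `(x + ei)·(v + ej) = u·y`). -/
theorem moebius_cipher_complete_mixed_coordinate (F : Type*) [Field F] [Fintype F]
    [CharP F 2] (hcard : 4 ≤ Fintype.card F) :
    ∀ ei ej : F, ei ≠ 0 → ej ≠ 0 →
      ∃ x y u v : F, (x, y) ≠ (0, 0) ∧ (u, v) ≠ (0, 0) ∧
        (x + ei, y) ≠ ((0 : F), (0 : F)) ∧ (u, v + ej) ≠ ((0 : F), (0 : F)) ∧
        x * v = u * y ∧ (x + ei) * (v + ej) = u * y :=
  moebius_cipher_complete_mixed_coordinate_general F hcard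
end
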